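/- For b ≥ 1, the generating function for right-skewed (n,b)-domino towers is R_b(x) = (x^b/(1−2x^b)) · Σ_{j=1}^{b} H_j(x) · (Σ_{S ⊆ {j, j+1, ..., b−1}} Π_{k∈S} 2x^k/(1−2x^k)), as formal power series. -/

import Mathlib

/-- `hFun b n` is the number of `(n,b)`-domino stacks, defined by the recurrence
`h_b(n) = Σ_{i=1}^{b} (2(b-i)+1) h_i(n-b)` with `h_b(b) = 1` and `h_b(n) = 0`
when `n < 1`, `b < 1`, or `n < b`. -/
def hFun : ℕ → ℕ → ℕ
  | b, n =>
    if b = 0 ∨ n ≤ b then (if n = b ∧ 1 ≤ b then 1 else 0)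
    else ∑ i ∈ Finset.Icc 1 b, (2 * (b - i) + 1) * hFun i (n - b)
termination_by b n => n
decreasing_by omega

/-- `rFun b n` is the number of right-skewed `(n,b)`-domino towers, defined by the
recurrence `r_b(n) = Σ_{i=1}^{b} (2 r_i(n-b) + h_i(n-b))` with `r_b(b+1) = 1` and
`r_b(n) = 0` for `n < 2`, `b < 1`, or `n < b+1`. -/
def rFun : ℕ → ℕ → ℕ
  | b, n =>
    if b = 0 ∨ n ≤ b + 1 then (if n = b + 1 ∧ 1 ≤ b then 1 else 0)
    else ∑ i ∈ Finset.Icc 1 b, (2 * rFun i (n - b) + hFun i (n - b))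
termination_by b n => n
decreasing_by omega

/-!
Put `G_b = Σ_{i=1}^{b} (2 R_i + H_i)`. The recursion for `r_b` says `R_b = x^b G_b` (also at the
initial values), so `G_b = G_{b-1} + 2 x^b G_b + H_b`, that is `G_b = (H_b + G_{b-1}) / (1 - 2x^b)`.
Unrolling this first-order recursion gives `G_b = Σ_{j=1}^{b} H_j Π_{k=j}^{b} 1/(1 - 2x^k)`. On the
other side, the sum over `S` is the expansion of `Π_{k=j}^{b-1} (1 + 2x^k/(1 - 2x^k))`, and each
factor equals `1/(1 - 2x^k)`.
-/

open PowerSeries Finset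

theorem eq_sum_mul_prod_Icc_of_eq_mul_add {R : Type*} [CommSemiring R] {g h u : ℕ → R}
    (h0 : g 0 = 0) (hsucc : ∀ n, g (n + 1) = u (n + 1) * (h (n + 1) + g n)) (n : ℕ) :
    g n = ∑ j ∈ Icc 1 n, h j * ∏ k ∈ Icc j n, u k := by
  induction n with
  | zero => simp [h0]
  | succ n ih =>
    rw [hsucc, ih, sum_Icc_succ_top (by omega), Icc_self, prod_singleton, mul_add, mul_sum,
      add_comm]
    congr 1
    · refine sum_congr rfl fun j hj => ?_
      rw [prod_Icc_succ_top (by grind)]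
      ring
    · ring

theorem PowerSeries.one_add_mul_inv_one_sub {k : Type*} [Field k] {φ : k⟦X⟧}
    (hφ : constantCoeff φ = 0) : 1 + φ * (1 - φ)⁻¹ = (1 - φ)⁻¹ := by
  have hu : (1 - φ) * (1 - φ)⁻¹ = 1 := PowerSeries.mul_inv_cancel _ (by simp [hφ])
  linear_combination -hu

theorem constantCoeff_two_mul_X_pow {R : Type*} [Semiring R] {k : ℕ} (hk : k ≠ 0) :
    constantCoeff (2 * X ^ k : R⟦X⟧) = 0 := by
  simp [zero_pow hk]

theorem hFun_of_le {b n : ℕ} (h : n ≤ b) : hFun b n = if n = b ∧ 1 ≤ b then 1 else 0 := by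
  rw [hFun, if_pos (Or.inr h)]

theorem rFun_of_le {b n : ℕ} (h : n ≤ b + 1) :
    rFun b n = if n = b + 1 ∧ 1 ≤ b then 1 else 0 := by
  rw [rFun, if_pos (Or.inr h)]

/-- For `n = b` the sum vanishes and for `n = b + 1` its only nonzero term is `hFun 1 1 = 1`,
matching the initial values of `rFun`. -/
theorem rFun_eq_sum {b n : ℕ} (hb : 1 ≤ b) (hn : b ≤ n) :
    rFun b n = ∑ i ∈ Icc 1 b, (2 * rFun i (n - b) + hFun i (n - b)) := by
  rcases le_or_gt n (b + 1) with h | h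
  · have hterm : ∀ i ∈ Icc 1 b,
        2 * rFun i (n - b) + hFun i (n - b) = if n - b = i then 1 else 0 := by
      intro i hi
      rw [mem_Icc] at hi
      rw [rFun_of_le (by omega), hFun_of_le (by omega), if_neg (by omega)]
      split_ifs <;> omega
    rw [rFun_of_le h, sum_congr rfl hterm, sum_ite_eq]
    simp only [mem_Icc]
    split_ifs <;> omega
  · rw [rFun, if_neg (by omega)]

noncomputable def hGenFun (b : ℕ) : ℚ⟦X⟧ := PowerSeries.mk fun n => (hFun b n : ℚ)

noncomputable def rGenFun (b : ℕ) : ℚ⟦X⟧ := PowerSeries.mk fun n => (rFun b n : ℚ)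

theorem rGenFun_eq_X_pow_mul {b : ℕ} (hb : 1 ≤ b) :
    rGenFun b = X ^ b * ∑ i ∈ Icc 1 b, (2 * rGenFun i + hGenFun i) := by
  ext n
  rw [coeff_X_pow_mul']
  split_ifs with h
  · simp [rGenFun, hGenFun, rFun_eq_sum hb h, map_sum, two_mul]
  · rw [rGenFun, coeff_mk, rFun_of_le (by omega), if_neg (by omega), Nat.cast_zero]

theorem sum_rGenFun_succ (b : ℕ) :
    ∑ i ∈ Icc 1 (b + 1), (2 * rGenFun i + hGenFun i) =
      (1 - 2 * X ^ (b + 1))⁻¹ *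
        (hGenFun (b + 1) + ∑ i ∈ Icc 1 b, (2 * rGenFun i + hGenFun i)) := by
  have hR := rGenFun_eq_X_pow_mul (b := b + 1) (by omega)
  rw [sum_Icc_succ_top (by omega)] at hR ⊢
  rw [mul_comm _ (hGenFun _ + _), eq_mul_inv_iff_mul_eq (by simp [constantCoeff_two_mul_X_pow (Nat.succ_ne_zero b)])]
  linear_combination 2 * hR

theorem sum_rGenFun_eq_sum_prod (b : ℕ) :
    ∑ i ∈ Icc 1 b, (2 * rGenFun i + hGenFun i) =
      ∑ j ∈ Icc 1 b, hGenFun j * ∏ k ∈ Icc j b, (1 - 2 * X ^ k)⁻¹ :=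
  eq_sum_mul_prod_Icc_of_eq_mul_add (g := fun n => ∑ i ∈ Icc 1 n, (2 * rGenFun i + hGenFun i))
    (by simp) sum_rGenFun_succ b

open PowerSeries in
/-- For `b ≥ 1`, the generating function for right-skewed `(n,b)`-domino towers is
`R_b(x) = (x^b/(1-2x^b)) Σ_{j=1}^{b} H_j(x) (Σ_{S ⊆ {j,…,b-1}} Π_{k∈S} 2x^k/(1-2x^k))`,
as formal power series. -/
theorem right_skewed_genFun (b : ℕ) (hb : 1 ≤ b) :
    PowerSeries.mk (fun n => (rFun b n : ℚ)) =
      (X : PowerSeries ℚ) ^ b * (1 - 2 * (X : PowerSeries ℚ) ^ b)⁻¹ *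
        ∑ j ∈ Finset.Icc 1 b, PowerSeries.mk (fun n => (hFun j n : ℚ)) *
          ∑ S ∈ (Finset.Icc j (b - 1)).powerset, ∏ k ∈ S,
            (2 * (X : PowerSeries ℚ) ^ k * (1 - 2 * (X : PowerSeries ℚ) ^ k)⁻¹) := by
  obtain ⟨m, rfl⟩ := Nat.exists_eq_add_of_le' hb
  change rGenFun (m + 1) = _
  rw [rGenFun_eq_X_pow_mul hb, sum_rGenFun_eq_sum_prod, Nat.add_sub_cancel, mul_assoc]
  congr 1
  rw [mul_sum]
  refine sum_congr rfl fun j hj => ?_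
  have hgeom : ∀ k ∈ Icc j m, 1 + 2 * X ^ k * (1 - 2 * X ^ k)⁻¹ = (1 - 2 * X ^ k : ℚ⟦X⟧)⁻¹ :=
    fun k hk => one_add_mul_inv_one_sub (constantCoeff_two_mul_X_pow (by grind))
  rw [← prod_one_add (R := ℚ⟦X⟧), prod_congr rfl hgeom, prod_Icc_succ_top (by grind), hGenFun]
  ring
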